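/- Fix N ≥ 1 and r ∈ ℝ. Let H̃ be the N×N matrix with H̃_{ij} = (−1)^N(ψ_{i+j−N}(2r²) − ψ_{i+j−N+1}(2r²)) (ψ_n ≡ 0 for n < 0), Q the matrix with Q_{ij} = −2r if i=j, −4r if i>j, 0 if i<j, u the vector with all entries (−1)^{N−1}, and E = 4r·(H̃u)⊗u. Then QH̃ + H̃Q = −E. -/

import Mathlib

/-!
`H̃` is the Hankel matrix of consecutive differences `f (i + j) - f (i + j + 1)` of
`f m = (-1)^N ψ_{m-N}(2r²)`, and `f` vanishes below `N`. So the column sums `∑_{k<i} H̃_{kj}` and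
the row sums `∑_{k≥j} H̃_{ik}` telescope to `f j - f (i + j)` and `f (i + j) - f (i + N)`. As
`(QA + AQ)_{ij} = -4r (∑_{k<i} A_{kj} + ∑_{k≥j} A_{ik})` for every matrix `A`, and `u ⊗ u` is the
all-ones matrix, both sides of the identity have entries `4r f (i + N)`.
-/

open MeasureTheory

/-- The `k`-th (normalized) Laguerre polynomial. -/
noncomputable def Lag (k : ℕ) (x : ℝ) : ℝ :=
  ∑ l ∈ Finset.range (k + 1), (k.choose l : ℝ) * (-1) ^ l / (Nat.factorial l) * x ^ l

/-- The Laguerre function `ψ_n(x) = e^{-x/2} L_n(x)` for `n ≥ 0`,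
extended by `ψ_n ≡ 0` for `n < 0`. -/
noncomputable def psiZ (n : ℤ) (x : ℝ) : ℝ :=
  if 0 ≤ n then Real.exp (-x / 2) * Lag n.toNat x else 0

/-- The Laguerre function with natural index. -/
noncomputable def psiL (n : ℕ) (x : ℝ) : ℝ := Real.exp (-x / 2) * Lag n x

/-- The matrix `H̃`, with `H̃_{ij} = (-1)^N (ψ_{i+j-N}(2r²) - ψ_{i+j-N+1}(2r²))`. -/
noncomputable def Ht (N : ℕ) (r : ℝ) : Matrix (Fin N) (Fin N) ℝ :=
  fun i j => (-1) ^ N *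
    (psiZ ((i : ℤ) + (j : ℤ) - (N : ℤ)) (2 * r ^ 2) -
     psiZ ((i : ℤ) + (j : ℤ) - (N : ℤ) + 1) (2 * r ^ 2))

/-- The matrix `Q`: `-2r` on the diagonal, `-4r` below it, `0` above it. -/
noncomputable def Qm (N : ℕ) (r : ℝ) : Matrix (Fin N) (Fin N) ℝ :=
  fun i j => if (i : ℕ) = (j : ℕ) then -2 * r
    else if (j : ℕ) < (i : ℕ) then -4 * r else 0

/-- The constant vector `u` with all entries `(-1)^{N-1}`. -/
noncomputable def uVec (N : ℕ) : Fin N → ℝ := fun _ => (-1) ^ (N - 1)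

/-- The alternating vector `v` with entries `v_i = 2(-1)^i`. -/
noncomputable def vVec (N : ℕ) : Fin N → ℝ := fun i => 2 * (-1) ^ (i : ℕ)

open Finset

theorem psiZ_of_neg {n : ℤ} (hn : n < 0) (x : ℝ) : psiZ n x = 0 := by
  simp [psiZ, not_le.mpr hn]

def hankelDiff {R : Type*} [AddCommGroup R] (N : ℕ) (f : ℕ → R) : Matrix (Fin N) (Fin N) R :=
  Matrix.of fun i j => f (i + j) - f (i + j + 1)

section hankelDiff

variable {R : Type*} [AddCommGroup R] (f : ℕ → R) {N : ℕ}

theorem sum_Ico_sub_add_succ (c : ℕ) {a b : ℕ} (hab : a ≤ b) :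
    ∑ k ∈ Ico a b, (f (k + c) - f (k + c + 1)) = f (a + c) - f (b + c) := by
  rw [← neg_sub (f (b + c)), ← sum_Ico_sub (fun k => f (k + c)) hab, ← sum_neg_distrib]
  simp only [neg_sub, Nat.add_right_comm _ 1 c]

theorem Fin.sum_Iio_eq_sum_range (g : ℕ → R) (i : Fin N) :
    ∑ k ∈ Iio i, g k = ∑ k ∈ range i, g k := by
  rw [← Nat.Iio_eq_range, ← Fin.map_valEmbedding_Iio, sum_map]
  rfl

theorem Fin.sum_Ici_eq_sum_Ico (g : ℕ → R) (i : Fin N) :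
    ∑ k ∈ Ici i, g k = ∑ k ∈ Ico (i : ℕ) N, g k := by
  rw [← Fin.map_valEmbedding_Ici, sum_map]
  rfl

theorem sum_Iio_hankelDiff (i j : Fin N) :
    ∑ k ∈ Iio i, hankelDiff N f k j = f j - f (i + j) := by
  simp only [hankelDiff, Matrix.of_apply]
  rw [Fin.sum_Iio_eq_sum_range (fun k => f (k + j) - f (k + j + 1)), range_eq_Ico,
    sum_Ico_sub_add_succ f j (Nat.zero_le i), zero_add]

theorem sum_Ici_hankelDiff (i j : Fin N) :
    ∑ k ∈ Ici j, hankelDiff N f i k = f (i + j) - f (i + N) := by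
  simp only [hankelDiff, Matrix.of_apply, add_comm (i : ℕ)]
  rw [Fin.sum_Ici_eq_sum_Ico (fun k => f (k + i) - f (k + i + 1)),
    sum_Ico_sub_add_succ f i j.isLt.le]

theorem sum_hankelDiff_row (i : Fin N) : ∑ k, hankelDiff N f i k = f i - f (i + N) := by
  simp only [hankelDiff, Matrix.of_apply, add_comm (i : ℕ)]
  rw [Fin.sum_univ_eq_sum_range (fun k => f (k + i) - f (k + i + 1)), range_eq_Ico,
    sum_Ico_sub_add_succ f i (Nat.zero_le N), zero_add]

end hankelDiff

section Qm

variable (N : ℕ) (r : ℝ) (A : Matrix (Fin N) (Fin N) ℝ) (i j : Fin N)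

theorem Qm_apply (k : Fin N) :
    Qm N r i k = (if i = k then -2 * r else 0) + (if k < i then -4 * r else 0) := by
  simp only [Qm, Fin.val_inj, Fin.lt_def]
  split_ifs <;> first | omega | ring

theorem Qm_mul_apply :
    (Qm N r * A) i j = -2 * r * A i j + -4 * r * ∑ k ∈ Iio i, A k j := by
  simp only [Matrix.mul_apply, Qm_apply, add_mul, sum_add_distrib, ite_mul, zero_mul,
    sum_ite_eq, mem_univ, if_true, ← sum_filter, filter_gt_eq_Iio, mul_sum]

theorem mul_Qm_apply :
    (A * Qm N r) i j = -2 * r * A i j + -4 * r * ∑ k ∈ Ioi j, A i k := by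
  simp only [Matrix.mul_apply, Qm_apply, mul_add, sum_add_distrib, mul_ite, mul_zero,
    sum_ite_eq', mem_univ, if_true, ← sum_filter, filter_lt_eq_Ioi, mul_sum]
  ring_nf

theorem Qm_mul_add_mul_Qm_apply :
    (Qm N r * A + A * Qm N r) i j = -4 * r * (∑ k ∈ Iio i, A k j + ∑ k ∈ Ici j, A i k) := by
  rw [Matrix.add_apply, Qm_mul_apply, mul_Qm_apply, Ici_eq_cons_Ioi, sum_cons]
  ring

end Qm

theorem Qm_mul_hankelDiff_add_hankelDiff_mul_Qm {N : ℕ} (r c : ℝ) (hc : c * c = 1) (f : ℕ → ℝ)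
    (hf : ∀ m < N, f m = 0) :
    Qm N r * hankelDiff N f + hankelDiff N f * Qm N r
      = -((4 * r) • Matrix.vecMulVec ((hankelDiff N f).mulVec fun _ => c) fun _ => c) := by
  ext i j
  rw [Qm_mul_add_mul_Qm_apply, sum_Iio_hankelDiff, sum_Ici_hankelDiff]
  simp only [Matrix.neg_apply, Matrix.smul_apply, Matrix.vecMulVec_apply, Matrix.mulVec,
    dotProduct, ← sum_mul, sum_hankelDiff_row, smul_eq_mul, hf j j.isLt, hf i i.isLt]
  linear_combination (-4 * r * f (i + N)) * hc

theorem Ht_eq_hankelDiff (N : ℕ) (r : ℝ) :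
    Ht N r = hankelDiff N fun m => (-1) ^ N * psiZ ((m : ℤ) - N) (2 * r ^ 2) := by
  ext i j
  simp only [Ht, hankelDiff, Matrix.of_apply, mul_sub]
  push_cast
  ring_nf

theorem stmt13_general (N : ℕ) (r : ℝ) :
    Qm N r * Ht N r + Ht N r * Qm N r
      = -((4 * r) • Matrix.vecMulVec ((Ht N r).mulVec (uVec N)) (uVec N)) := by
  rw [Ht_eq_hankelDiff]
  refine Qm_mul_hankelDiff_add_hankelDiff_mul_Qm r ((-1) ^ (N - 1)) ?_ _ fun m hm => ?_
  · rw [← mul_pow]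
    norm_num
  · rw [psiZ_of_neg (by omega), mul_zero]

theorem stmt13 (N : ℕ) (hN : 1 ≤ N) (r : ℝ) :
    Qm N r * Ht N r + Ht N r * Qm N r
      = -((4 * r) • Matrix.vecMulVec ((Ht N r).mulVec (uVec N)) (uVec N)) :=
  stmt13_general N r
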